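/- arXiv:1606.00216 — 8 statements merged into one kernel-verified Lean document; each statement's English description precedes it below -/
import Mathlib

section
/- Let m ≥ 1 and let ρ, σ be coprime integers. Then the cyclically presented group G_m(x_0^ρ x_1^{-σ}) = ⟨x_0,…,x_{m-1} | x_i^ρ = x_{i+1}^σ (indices mod m)⟩ is cyclic of order |ρ^m − σ^m| (infinite cyclic if ρ^m = σ^m), and each generator x_i generates the whole group. -/
/-- The relators of the cyclically presented group `G_m(x_0^ρ x_1^{-σ})`:
the shifts `x_i^ρ x_{i+1}^{-σ}` for `i ∈ ℤ/m`. -/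
def cycRels (m : ℕ) (ρ σ : ℤ) : Set (FreeGroup (ZMod m)) :=
  Set.range (fun i : ZMod m => FreeGroup.of i ^ ρ * FreeGroup.of (i + 1) ^ (-σ))

/-!
Writing `x i` for the generators and `N = ρ ^ m - σ ^ m`, the relations give
`x i ^ (ρ ^ k) = x (i + k) ^ (σ ^ k)`, so going once around the cycle `x i ^ N = 1`.
As `σ` is prime to `N`, `x (i + 1)` is a power of `x (i + 1) ^ σ = x i ^ ρ`, hence every
generator lies in the cyclic subgroup generated by `x i`, whose order therefore divides `|N|`.
Conversely, `σ` is invertible mod `N`; with `u = σ⁻¹ ρ` we have `u ^ m = 1`, and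
`x i ↦ u ^ i` defines a homomorphism onto `ℤ/|N|` (it sends `x 0` to `1`), so `|N|` also divides
the order of `x 0`.
-/

lemma pow_val_add_one {M : Type*} [Monoid M] {n : ℕ} [NeZero n] {a : M} (ha : a ^ n = 1)
    (i : ZMod n) : a ^ (i + 1).val = a ^ i.val * a := by
  rw [ZMod.val_add, ZMod.val_one_eq_one_mod, Nat.add_mod_mod, ← pow_eq_pow_mod _ ha, pow_succ]

lemma mem_zpowers_zpow_of_isCoprime {G : Type*} [Group G] {a : G} {n k : ℤ} (ha : a ^ n = 1)
    (hk : IsCoprime k n) : a ∈ Subgroup.zpowers (a ^ k) := by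
  obtain ⟨s, t, hst⟩ := hk
  refine ⟨s, ?_⟩
  calc (a ^ k) ^ s = a ^ (s * k + t * n) := by rw [zpow_add, mul_comm t, zpow_mul a n, ha,
        one_zpow, mul_one, mul_comm, zpow_mul]
    _ = a := by rw [hst, zpow_one]

lemma IsCoprime.isCoprime_pow_sub_pow {R : Type*} [CommRing R] {a b : R} (h : IsCoprime a b)
    {m : ℕ} (hm : 1 ≤ m) : IsCoprime b (a ^ m - b ^ m) := by
  obtain ⟨k, rfl⟩ := Nat.exists_eq_add_of_le' hm
  have := h.symm.pow_right (n := k + 1) |>.add_mul_left_right (-b ^ k)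
  rwa [mul_neg, ← sub_eq_add_neg, ← pow_succ'] at this

lemma Nat.card_eq_of_zpowers_eq_top_of_surjective {G H : Type*} [Group G] [Group H] {g : G}
    (hg : Subgroup.zpowers g = ⊤) (hgH : g ^ Nat.card H = 1) {f : G →* H}
    (hf : Function.Surjective f) : Nat.card G = Nat.card H := by
  have hfg : ∀ y, y ∈ Subgroup.zpowers (f g) := by
    intro y
    obtain ⟨x, rfl⟩ := hf y
    rw [← MonoidHom.map_zpowers]
    exact Subgroup.mem_map_of_mem f (hg ▸ Subgroup.mem_top x)
  have hH : orderOf (f g) = Nat.card H := orderOf_eq_card_of_forall_mem_zpowers hfg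
  rw [← Subgroup.card_top, ← hg, Nat.card_zpowers, ← hH]
  exact Nat.dvd_antisymm (hH ▸ orderOf_dvd_of_pow_eq_one hgH) (orderOf_map_dvd f g)

lemma IsUnit.exists_mul_eq_and_pow_eq_one {M : Type*} [CommMonoid M] {a b : M} (hb : IsUnit b)
    {m : ℕ} (h : a ^ m = b ^ m) : ∃ u : M, b * u = a ∧ u ^ m = 1 :=
  ⟨↑hb.unit⁻¹ * a, by rw [← mul_assoc, hb.mul_val_inv, one_mul],
    by rw [mul_pow, h, ← mul_pow, hb.val_inv_mul, one_pow]⟩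

namespace cycRels

variable {m : ℕ} {ρ σ : ℤ}

local notation "x" => PresentedGroup.of (rels := cycRels m ρ σ)

lemma of_zpow_eq (i : ZMod m) : x i ^ ρ = x (i + 1) ^ σ := by
  have h : PresentedGroup.mk (cycRels m ρ σ)
      (FreeGroup.of i ^ ρ * FreeGroup.of (i + 1) ^ (-σ)) = 1 :=
    (QuotientGroup.eq_one_iff _).mpr (Subgroup.subset_normalClosure ⟨i, rfl⟩)
  rwa [map_mul, map_zpow, map_zpow, zpow_neg, mul_inv_eq_one] at h

lemma of_zpow_pow_eq (i : ZMod m) (k : ℕ) : x i ^ (ρ ^ k) = x (i + k) ^ (σ ^ k) := by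
  induction k with
  | zero => simp
  | succ k ih =>
    rw [pow_succ, zpow_mul, ih, ← zpow_mul, mul_comm, zpow_mul, of_zpow_eq, ← zpow_mul,
      mul_comm, ← pow_succ, Nat.cast_succ, add_assoc]

lemma of_zpow_pow_sub_pow (i : ZMod m) : x i ^ (ρ ^ m - σ ^ m) = 1 := by
  rw [zpow_sub, of_zpow_pow_eq, ZMod.natCast_self, add_zero, mul_inv_cancel]

lemma zpowers_of_add_one_le (hm : 1 ≤ m) (hρσ : IsCoprime ρ σ) (i : ZMod m) :
    Subgroup.zpowers (x (i + 1)) ≤ Subgroup.zpowers (x i) := by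
  have h := mem_zpowers_zpow_of_isCoprime (of_zpow_pow_sub_pow (i + 1))
    (hρσ.isCoprime_pow_sub_pow hm)
  rw [← of_zpow_eq] at h
  rw [Subgroup.zpowers_le]
  exact Subgroup.zpowers_le.mpr (Subgroup.zpow_mem _ (Subgroup.mem_zpowers _) _) h

lemma zpowers_of_eq_top (hm : 1 ≤ m) (hρσ : IsCoprime ρ σ) (i : ZMod m) :
    Subgroup.zpowers (x i) = ⊤ := by
  have : NeZero m := ⟨by omega⟩
  have hle (k : ℕ) : Subgroup.zpowers (x (i + k)) ≤ Subgroup.zpowers (x i) := by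
    induction k with
    | zero => simp
    | succ k ih =>
      rw [Nat.cast_succ, ← add_assoc]
      exact (zpowers_of_add_one_le hm hρσ _).trans ih
  rw [eq_top_iff, ← PresentedGroup.closure_range_of, Subgroup.closure_le]
  rintro - ⟨j, rfl⟩
  simpa only [ZMod.natCast_zmod_val, add_sub_cancel] using
    SetLike.coe_subset_coe.mpr (hle (j - i).val) (Subgroup.mem_zpowers _)

noncomputable def toZMod [NeZero m] {N : ℕ} {u : ZMod N} (hu : u ^ m = 1) (hσu : σ * u = ρ) :
    PresentedGroup (cycRels m ρ σ) →* Multiplicative (ZMod N) :=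
  PresentedGroup.toGroup (f := fun i ↦ Multiplicative.ofAdd (u ^ i.val)) <| by
    rintro - ⟨i, rfl⟩
    rw [map_mul, map_zpow, map_zpow, FreeGroup.lift_apply_of, FreeGroup.lift_apply_of,
      ← ofAdd_zsmul, ← ofAdd_zsmul, ← ofAdd_add, ofAdd_eq_one, zsmul_eq_mul, zsmul_eq_mul,
      pow_val_add_one hu, ← hσu]
    push_cast
    ring

lemma toZMod_of_zero [NeZero m] {N : ℕ} {u : ZMod N} (hu : u ^ m = 1) (hσu : σ * u = ρ) :
    toZMod hu hσu (x 0) = Multiplicative.ofAdd 1 := by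
  simp [toZMod]

lemma toZMod_surjective [NeZero m] {N : ℕ} {u : ZMod N} (hu : u ^ m = 1) (hσu : σ * u = ρ) :
    Function.Surjective (toZMod hu hσu) := by
  intro y
  obtain ⟨c, hc⟩ := ZMod.intCast_surjective y.toAdd
  refine ⟨x 0 ^ c, ?_⟩
  rw [map_zpow, toZMod_of_zero, ← ofAdd_zsmul, zsmul_one, hc, ofAdd_toAdd]

end cycRels

lemma IsCoprime.exists_zmod_mul_eq_and_pow_eq_one {ρ σ : ℤ} (hρσ : IsCoprime ρ σ) {m : ℕ}
    (hm : 1 ≤ m) :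
    ∃ u : ZMod (ρ ^ m - σ ^ m).natAbs, σ * u = ρ ∧ u ^ m = 1 := by
  have hN : ((ρ ^ m - σ ^ m : ℤ) : ZMod (ρ ^ m - σ ^ m).natAbs) = 0 :=
    (ZMod.intCast_zmod_eq_zero_iff_dvd _ _).mpr (Int.natAbs_dvd.mpr dvd_rfl)
  have hσ : IsUnit (σ : ZMod (ρ ^ m - σ ^ m).natAbs) := by
    rw [← isCoprime_zero_right, ← hN]
    exact (hρσ.isCoprime_pow_sub_pow hm).map (Int.castRingHom (ZMod (ρ ^ m - σ ^ m).natAbs))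
  rw [Int.cast_sub, sub_eq_zero] at hN
  exact hσ.exists_mul_eq_and_pow_eq_one (by exact_mod_cast hN)

/-- for `m ≥ 1` and coprime integers `ρ, σ`, the cyclically presented
group `G_m(x_0^ρ x_1^{-σ})` is cyclic of order `|ρ^m - σ^m|` (infinite cyclic when
`ρ^m = σ^m`, in which case `Nat.card = 0`), and each generator `x_i` generates the
whole group. -/
theorem stmt_0 (m : ℕ) (hm : 1 ≤ m) (ρ σ : ℤ) (hρσ : Int.gcd ρ σ = 1) :
    IsCyclic (PresentedGroup (cycRels m ρ σ)) ∧
    Nat.card (PresentedGroup (cycRels m ρ σ)) = (ρ ^ m - σ ^ m).natAbs ∧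
    ∀ i : ZMod m,
      Subgroup.zpowers (PresentedGroup.of (rels := cycRels m ρ σ) i) = ⊤ := by
  have hcop : IsCoprime ρ σ := Int.isCoprime_iff_gcd_eq_one.mpr hρσ
  have hgen := cycRels.zpowers_of_eq_top hm hcop
  have : NeZero m := ⟨by omega⟩
  obtain ⟨u, hσu, hu⟩ := hcop.exists_zmod_mul_eq_and_pow_eq_one hm
  refine ⟨isCyclic_iff_exists_zpowers_eq_top.mpr ⟨_, hgen 0⟩, ?_, hgen⟩
  have hcard : Nat.card (Multiplicative (ZMod (ρ ^ m - σ ^ m).natAbs)) =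
      (ρ ^ m - σ ^ m).natAbs := by
    rw [Nat.card_congr Multiplicative.toAdd, Nat.card_zmod]
  rw [← hcard]
  refine Nat.card_eq_of_zpowers_eq_top_of_surjective (hgen 0) ?_ (cycRels.toZMod_surjective hu hσu)
  rw [hcard, pow_natAbs_eq_one]
  exact cycRels.of_zpow_pow_sub_pow 0
end

section
/- Given integers m ≥ 1, ρ, σ, α with (ρ,σ) = 1 and (m,α) = 1, the group M = ⟨u,v | v^m, u^ρ v^α u^{-σ} v^{-α}⟩ is a split metacyclic group ⟨u⟩ ⋊ ⟨v⟩ with cyclic normal subgroup ⟨u⟩ ≅ Z_{|ρ^m−σ^m|} and complement ⟨v⟩ ≅ Z_m. -/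
/-!
Write `u, v` for the generators and `N = ρ^m - σ^m`. Conjugating `m` times by `v^α` turns the
relation `v^α u^σ v^{-α} = u^ρ` into `u^{σ^m} = u^{ρ^m}`, so `u^N = 1`. Since `σ` is invertible
modulo `N`, conjugation by `v^α` maps `u` to a power of `u`, and `v` is a power of `v^α` because `α`
is invertible modulo `m`; hence `⟨u⟩` is normal and `M = ⟨u⟩⟨v⟩`. Two representations make the
orders exact: `M → ℤ_m` killing `u`, which also separates `⟨v⟩` from `⟨u⟩`, and the action of `M`
on `ℤ_N` by affine maps, with `u` acting as `x ↦ x + 1` and `v^α` as multiplication by `ρ σ⁻¹`,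
an `m`-th root of unity modulo `N`.
-/

/-- The relators of the group `M = ⟨u,v | v^m, u^ρ v^α u^{-σ} v^{-α}⟩`,
where `u` is indexed by `true` and `v` by `false`. -/
def Mrels (m : ℕ) (ρ σ α : ℤ) : Set (FreeGroup Bool) :=
  {FreeGroup.of false ^ (m : ℤ),
   FreeGroup.of true ^ ρ * FreeGroup.of false ^ α *
     FreeGroup.of true ^ (-σ) * FreeGroup.of false ^ (-α)}

section Conjugation

variable {G : Type*} [Group G]

theorem conj_pow_zpow_pow {g u : G} {s t : ℤ} (h : g * u ^ s * g⁻¹ = u ^ t) (n : ℕ) :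
    g ^ n * u ^ s ^ n * (g ^ n)⁻¹ = u ^ t ^ n := by
  induction n with
  | zero => simp
  | succ n ih =>
    calc g ^ (n + 1) * u ^ s ^ (n + 1) * (g ^ (n + 1))⁻¹
        = g ^ n * (g * (u ^ s) ^ s ^ n * g⁻¹) * (g ^ n)⁻¹ := by
          rw [← zpow_mul, ← pow_succ', pow_succ, mul_inv_rev]; group
      _ = g ^ n * (u ^ s ^ n) ^ t * (g ^ n)⁻¹ := by
          rw [← conj_zpow, h, ← zpow_mul, ← zpow_mul, mul_comm]
      _ = u ^ t ^ (n + 1) := by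
          rw [← conj_zpow, ih, ← zpow_mul, pow_succ]

theorem exists_conj_eq_zpow_of_isCoprime {g u : G} {s t N : ℤ} (hN : u ^ N = 1)
    (hs : IsCoprime s N) (h : g * u ^ s * g⁻¹ = u ^ t) : ∃ k : ℤ, g * u * g⁻¹ = u ^ k := by
  obtain ⟨x, y, hxy⟩ := hs
  have hu : u = (u ^ s) ^ x := by
    rw [← zpow_mul', ← mul_one (u ^ (x * s)), ← one_zpow y, ← hN, ← zpow_mul', ← zpow_add, hxy,
      zpow_one]
  refine ⟨t * x, ?_⟩
  calc g * u * g⁻¹ = g * (u ^ s) ^ x * g⁻¹ := by rw [← hu]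
    _ = u ^ (t * x) := by rw [← conj_zpow, h, ← zpow_mul]

theorem mem_normalizer_zpowers_of_conj_eq_zpow {g u : G} (hg : IsOfFinOrder g) {k : ℤ}
    (h : g * u * g⁻¹ = u ^ k) : g ∈ Subgroup.normalizer (Subgroup.zpowers u : Set G) := by
  rw [← Subgroup.zpowers_le, Subgroup.le_normalizer_iff]
  rintro _ hgn _ ⟨j, rfl⟩
  obtain ⟨n, rfl⟩ := hg.mem_powers_iff_mem_zpowers.mpr hgn
  have hn : g ^ n * u * (g ^ n)⁻¹ = u ^ k ^ n := by
    simpa using conj_pow_zpow_pow (s := 1) (by rwa [zpow_one]) n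
  exact ⟨k ^ n * j, by simp only [← conj_zpow, hn, zpow_mul]⟩

theorem exists_zpow_zpow_eq_self {g : G} {m : ℕ} (hg : g ^ m = 1) {α : ℤ}
    (hα : IsCoprime α m) : ∃ β : ℤ, (g ^ β) ^ α = g := by
  obtain ⟨β, k, hβ⟩ := hα
  refine ⟨β, ?_⟩
  rw [← zpow_mul, show β * α = 1 + m * -k by linarith, zpow_add, zpow_one, zpow_mul, zpow_natCast,
    hg, one_zpow, mul_one]

end Conjugation

theorem Equiv.orderOf_addLeft {A : Type*} [AddGroup A] (a : A) :
    orderOf (Equiv.addLeft a) = addOrderOf a := by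
  rw [← orderOf_ofAdd_eq_addOrderOf, orderOf_eq_orderOf_iff]
  intro n
  rw [Equiv.nsmul_addLeft, ← ofAdd_nsmul, ofAdd_eq_one]
  exact ⟨fun h => by simpa using Equiv.congr_fun h 0, fun h => by rw [h, Equiv.addLeft_zero]⟩

theorem isCoprime_pow_sub_pow {σ ρ : ℤ} (h : IsCoprime σ ρ) {m : ℕ} (hm : m ≠ 0) :
    IsCoprime σ (ρ ^ m - σ ^ m) := by
  have : ρ ^ m - σ ^ m = ρ ^ m + σ * -σ ^ (m - 1) := by
    rw [mul_neg, ← pow_succ', Nat.sub_add_cancel (Nat.one_le_iff_ne_zero.mpr hm), sub_eq_add_neg]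
  rw [this]
  exact h.pow_right.add_mul_left_right _

theorem exists_unit_pow_eq_one_mul_eq {R : Type*} [CommMonoid R] {m : ℕ} (hm : m ≠ 0)
    {r s d : R} (hsd : s * d = 1) (hrs : r ^ m = s ^ m) : ∃ w : Rˣ, w ^ m = 1 ∧ w * s = r := by
  have hw : (r * d) ^ m = 1 := by rw [mul_pow, hrs, ← mul_pow, hsd, one_pow]
  refine ⟨Units.ofPowEqOne _ m hw hm, Units.ext (by simp), ?_⟩
  rw [Units.val_ofPowEqOne, mul_right_comm, mul_assoc, hsd, mul_one]

theorem addLeft_zpow_mul_toPermHom_mul_eq_one {R : Type*} [CommRing R] {ρ σ : ℤ} (w : Rˣ)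
    (hw : w * (σ : R) = ρ) :
    Equiv.addLeft (1 : R) ^ ρ * MulAction.toPermHom Rˣ R w * Equiv.addLeft 1 ^ (-σ) *
      (MulAction.toPermHom Rˣ R w)⁻¹ = 1 := by
  rw [← map_inv]
  ext x
  have hww : (w : R) * (w⁻¹ : Rˣ) = 1 := by simp
  simp only [Equiv.zsmul_addLeft, Equiv.Perm.mul_apply, MulAction.toPermHom_apply,
    MulAction.toPerm_apply, Equiv.coe_addLeft, zsmul_eq_mul, mul_one, Units.smul_def,
    Int.cast_neg, Equiv.Perm.one_apply, smul_eq_mul]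
  linear_combination -hw + x * hww

namespace Mrels

variable {m : ℕ} {ρ σ α : ℤ}

local notation "𝔲" => PresentedGroup.of (rels := Mrels m ρ σ α) true
local notation "𝔳" => PresentedGroup.of (rels := Mrels m ρ σ α) false

theorem of_false_pow_eq_one : 𝔳 ^ m = 1 := by
  have h := PresentedGroup.one_of_mem (rels := Mrels m ρ σ α) (Or.inl rfl)
  rwa [map_zpow, zpow_natCast] at h

theorem conj_of_true : 𝔳 ^ α * 𝔲 ^ σ * (𝔳 ^ α)⁻¹ = 𝔲 ^ ρ := by
  have h : 𝔲 ^ ρ * 𝔳 ^ α * 𝔲 ^ (-σ) * 𝔳 ^ (-α) = 1 := by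
    have h := PresentedGroup.one_of_mem (rels := Mrels m ρ σ α) (Or.inr rfl)
    simp only [map_mul, map_zpow] at h
    exact h
  calc _ = (𝔲 ^ ρ * 𝔳 ^ α * 𝔲 ^ (-σ) * 𝔳 ^ (-α))⁻¹ * 𝔲 ^ ρ := by group
    _ = 𝔲 ^ ρ := by rw [h, inv_one, one_mul]

theorem lift_eq_one_of_mem {H : Type*} [Group H] {x y : H} (hy : y ^ (m : ℤ) = 1)
    (hxy : x ^ ρ * y ^ α * x ^ (-σ) * y ^ (-α) = 1) :
    ∀ r ∈ Mrels m ρ σ α, FreeGroup.lift (fun b => cond b x y) r = 1 := by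
  rintro _ (rfl | rfl) <;>
    simp only [map_mul, map_zpow, FreeGroup.lift_apply_of, cond_true, cond_false] <;> assumption

/-- Only `W = y ^ α` has to be supplied: `y = W ^ β` for an inverse `β` of `α` modulo `m`. -/
theorem exists_hom_of_true_eq {H : Type*} [Group H] (hα : IsCoprime α m) (x W : H)
    (hW : W ^ m = 1) (hxW : x ^ ρ * W * x ^ (-σ) * W⁻¹ = 1) :
    ∃ f : PresentedGroup (Mrels m ρ σ α) →* H, f 𝔲 = x := by
  obtain ⟨β, hWα⟩ := exists_zpow_zpow_eq_self hW hα
  have hy : (W ^ β) ^ (m : ℤ) = 1 := by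
    rw [← zpow_mul, mul_comm, zpow_mul, zpow_natCast, hW, one_zpow]
  have hxy : x ^ ρ * (W ^ β) ^ α * x ^ (-σ) * (W ^ β) ^ (-α) = 1 := by
    rwa [zpow_neg (W ^ β), hWα]
  exact ⟨PresentedGroup.toGroup (lift_eq_one_of_mem hy hxy), PresentedGroup.toGroup.of _⟩

theorem exists_hom_zmod : ∃ f : PresentedGroup (Mrels m ρ σ α) →* Multiplicative (ZMod m),
    f 𝔲 = 1 ∧ f 𝔳 = Multiplicative.ofAdd 1 := by
  have hy : Multiplicative.ofAdd (1 : ZMod m) ^ (m : ℤ) = 1 := by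
    rw [zpow_natCast, ← ofAdd_nsmul, nsmul_one, ZMod.natCast_self, ofAdd_zero]
  have hxy : (1 : Multiplicative (ZMod m)) ^ ρ * Multiplicative.ofAdd 1 ^ α * 1 ^ (-σ) *
      Multiplicative.ofAdd 1 ^ (-α) = 1 := by
    rw [one_zpow, one_zpow, one_mul, mul_one, ← zpow_add, add_neg_cancel, zpow_zero]
  exact ⟨PresentedGroup.toGroup (lift_eq_one_of_mem hy hxy), PresentedGroup.toGroup.of _,
    PresentedGroup.toGroup.of _⟩

theorem zpowers_sup_zpowers : Subgroup.zpowers 𝔲 ⊔ Subgroup.zpowers 𝔳 = ⊤ := by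
  rw [eq_top_iff, ← PresentedGroup.closure_range_of, Subgroup.closure_le]
  rintro _ ⟨_ | _, rfl⟩
  · exact Subgroup.mem_sup_right (Subgroup.mem_zpowers _)
  · exact Subgroup.mem_sup_left (Subgroup.mem_zpowers _)

theorem orderOf_of_false : orderOf 𝔳 = m := by
  obtain ⟨f, -, hfv⟩ := exists_hom_zmod
  refine Nat.dvd_antisymm (orderOf_dvd_of_pow_eq_one ?_) ?_
  · exact of_false_pow_eq_one
  · simpa [hfv, orderOf_ofAdd_eq_addOrderOf] using orderOf_map_dvd f 𝔳

theorem zpowers_inf_zpowers : Subgroup.zpowers 𝔲 ⊓ Subgroup.zpowers 𝔳 = ⊥ := by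
  obtain ⟨f, hfu, hfv⟩ := exists_hom_zmod
  rw [eq_bot_iff]
  rintro x ⟨⟨a, rfl⟩, ⟨b, hb⟩⟩
  dsimp only at hb ⊢
  have hdvd : (orderOf 𝔳 : ℤ) ∣ b := by
    rw [orderOf_of_false, ← ZMod.addOrderOf_one m, ← orderOf_ofAdd_eq_addOrderOf, ← hfv,
      orderOf_dvd_iff_zpow_eq_one, ← map_zpow, hb, map_zpow, hfu, one_zpow]
  rw [Subgroup.mem_bot, ← hb, orderOf_dvd_iff_zpow_eq_one.mp hdvd]

theorem of_true_zpow_eq_one : 𝔲 ^ (ρ ^ m - σ ^ m) = 1 := by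
  have h : (𝔳 ^ α) ^ m * 𝔲 ^ σ ^ m * ((𝔳 ^ α) ^ m)⁻¹ = 𝔲 ^ ρ ^ m :=
    conj_pow_zpow_pow conj_of_true m
  rw [← zpow_natCast, ← zpow_mul, mul_comm, zpow_mul, zpow_natCast, of_false_pow_eq_one, one_zpow,
    one_mul, inv_one, mul_one] at h
  rw [zpow_sub, h, mul_inv_cancel]

theorem normal_zpowers_of_true (hm : m ≠ 0) (hσ : IsCoprime σ (ρ ^ m - σ ^ m))
    (hα : IsCoprime α m) : (Subgroup.zpowers 𝔲).Normal := by
  rw [← Subgroup.normalizer_eq_top_iff, eq_top_iff, ← PresentedGroup.closure_range_of,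
    Subgroup.closure_le]
  rintro _ ⟨_ | _, rfl⟩
  · have hfin : IsOfFinOrder (𝔳 ^ α) :=
      (isOfFinOrder_iff_pow_eq_one.mpr ⟨m, Nat.pos_of_ne_zero hm, of_false_pow_eq_one⟩).zpow
    obtain ⟨k, hk⟩ := exists_conj_eq_zpow_of_isCoprime of_true_zpow_eq_one hσ conj_of_true
    obtain ⟨β, hβ⟩ := exists_zpow_zpow_eq_self of_false_pow_eq_one hα
    refine Subgroup.zpowers_le.mpr (mem_normalizer_zpowers_of_conj_eq_zpow hfin hk) ⟨β, ?_⟩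
    change (𝔳 ^ α) ^ β = 𝔳
    rw [← zpow_mul, mul_comm, zpow_mul, hβ]
  · exact Subgroup.le_normalizer (Subgroup.mem_zpowers _)

theorem orderOf_of_true (hm : m ≠ 0) (hσ : IsCoprime σ (ρ ^ m - σ ^ m))
    (hα : IsCoprime α m) : orderOf 𝔲 = (ρ ^ m - σ ^ m).natAbs := by
  set n := (ρ ^ m - σ ^ m).natAbs
  obtain ⟨d, e, hde⟩ := hσ
  have hN : ((ρ ^ m - σ ^ m : ℤ) : ZMod n) = 0 :=
    (ZMod.intCast_zmod_eq_zero_iff_dvd _ _).mpr (Int.natAbs_dvd.mpr dvd_rfl)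
  have hsd : (σ : ZMod n) * d = 1 := by
    have := congrArg (Int.cast : ℤ → ZMod n) hde
    push_cast at this hN ⊢
    rwa [hN, mul_zero, add_zero, mul_comm] at this
  have hrs : (ρ : ZMod n) ^ m = (σ : ZMod n) ^ m := by
    push_cast at hN
    exact sub_eq_zero.mp hN
  obtain ⟨w, hw, hws⟩ := exists_unit_pow_eq_one_mul_eq hm hsd hrs
  obtain ⟨f, hf⟩ := exists_hom_of_true_eq hα (Equiv.addLeft 1)
    (MulAction.toPermHom _ _ w) (by rw [← map_pow, hw, map_one])
    (addLeft_zpow_mul_toPermHom_mul_eq_one w hws)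
  refine Nat.dvd_antisymm ?_ ?_
  · exact Int.natCast_dvd.mp (orderOf_dvd_iff_zpow_eq_one.mpr of_true_zpow_eq_one)
  · simpa [hf, Equiv.orderOf_addLeft] using orderOf_map_dvd f 𝔲

end Mrels

/-- with `(ρ,σ) = 1` and `(m,α) = 1`, the group
`M = ⟨u,v | v^m, u^ρ v^α u^{-σ} v^{-α}⟩` is split metacyclic of the form `⟨u⟩ ⋊ ⟨v⟩`,
with cyclic normal subgroup `⟨u⟩ ≅ ℤ_{|ρ^m-σ^m|}` and complement `⟨v⟩ ≅ ℤ_m`. -/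
theorem stmt_1 (m : ℕ) (hm : 1 ≤ m) (ρ σ α : ℤ)
    (hρσ : Int.gcd ρ σ = 1) (hmα : Int.gcd (m : ℤ) α = 1) :
    (Subgroup.zpowers (PresentedGroup.of (rels := Mrels m ρ σ α) true)).Normal ∧
    Subgroup.zpowers (PresentedGroup.of (rels := Mrels m ρ σ α) true) ⊔
      Subgroup.zpowers (PresentedGroup.of (rels := Mrels m ρ σ α) false) = ⊤ ∧
    Subgroup.zpowers (PresentedGroup.of (rels := Mrels m ρ σ α) true) ⊓
      Subgroup.zpowers (PresentedGroup.of (rels := Mrels m ρ σ α) false) = ⊥ ∧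
    Nat.card (Subgroup.zpowers (PresentedGroup.of (rels := Mrels m ρ σ α) true)) =
      (ρ ^ m - σ ^ m).natAbs ∧
    Nat.card (Subgroup.zpowers (PresentedGroup.of (rels := Mrels m ρ σ α) false)) = m := by
  have hm0 : m ≠ 0 := Nat.one_le_iff_ne_zero.mp hm
  have hσ : IsCoprime σ (ρ ^ m - σ ^ m) :=
    isCoprime_pow_sub_pow (Int.isCoprime_iff_gcd_eq_one.mpr hρσ).symm hm0
  have hα : IsCoprime α m := (Int.isCoprime_iff_gcd_eq_one.mpr hmα).symm
  rw [Nat.card_zpowers, Nat.card_zpowers]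
  exact ⟨Mrels.normal_zpowers_of_true hm0 hσ hα, Mrels.zpowers_sup_zpowers,
    Mrels.zpowers_inf_zpowers, Mrels.orderOf_of_true hm0 hσ hα, Mrels.orderOf_of_false⟩
end

section
/- Given integers m ≥ 1, ρ, σ, α with (ρ,σ) = 1, (m,α) = 1 and ρ^m = σ^m, either ρ = σ = ±1, in which case M = ⟨u,v | v^m, u^ρ v^α u^{-σ} v^{-α}⟩ is isomorphic to Z × Z_m, or ρ = −σ = ±1 and m is even, in which case M ≅ Z ⋊ Z_m (with the Z_m-action inverting Z via an odd power). -/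
open Multiplicative SemidirectProduct

section Group

variable {G : Type*} [Group G]

lemma zpow_zpow_eq_self_of_zpow_eq_one {x : G} {m α β γ : ℤ}
    (hx : x ^ m = 1) (h : γ * m + β * α = 1) : (x ^ α) ^ β = x := by
  conv_rhs => rw [← zpow_one x, ← h, zpow_add, mul_comm γ, zpow_mul, hx, one_zpow, one_mul]
  rw [← zpow_mul, mul_comm]

lemma zpow_eq_one_of_sq_eq_one_of_even {a : G} (ha : a ^ 2 = 1) {k : ℤ}
    (hk : Even k) : a ^ k = 1 := by
  obtain ⟨t, rfl⟩ := hk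
  rw [← two_mul, zpow_mul, zpow_two, ← sq, ha, one_zpow]

lemma zpow_eq_self_of_sq_eq_one_of_odd {a : G} (ha : a ^ 2 = 1) {k : ℤ}
    (hk : Odd k) : a ^ k = a := by
  obtain ⟨t, rfl⟩ := hk
  rw [zpow_add_one, zpow_eq_one_of_sq_eq_one_of_even ha (even_two_mul t), one_mul]

lemma mulAut_inv_sq (A : Type*) [CommGroup A] : (MulEquiv.inv A : MulAut A) ^ 2 = 1 := by
  ext; simp [sq]

lemma MulAut.zpow_apply_map {N : Type*} [Group N] (f : N →* G) {a : MulAut G}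
    {b : MulAut N} (h : ∀ x, a (f x) = f (b x)) (k : ℤ) (x : N) :
    (a ^ k) (f x) = f ((b ^ k) x) := by
  induction k using Int.induction_on generalizing x with
  | zero => rfl
  | succ k ih => rw [zpow_add_one, zpow_add_one, MulAut.mul_apply, MulAut.mul_apply, h, ih]
  | pred k ih =>
    rw [zpow_sub_one, zpow_sub_one, MulAut.mul_apply, MulAut.mul_apply, ← ih]
    congr 1
    refine a.injective ?_
    rw [h]
    simp

lemma MonoidHom.ext_mint_of_isUnit {f f' : Multiplicative ℤ →* G} {σ : ℤ}
    (hσ : IsUnit σ) (h : f (ofAdd σ) = f' (ofAdd σ)) : f = f' := by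
  refine MonoidHom.ext_mint ?_
  rw [← Int.isUnit_mul_self hσ, Int.ofAdd_mul, map_zpow, map_zpow, h]

end Group

section ZModPowers

variable {G : Type*} [Group G] {m : ℕ}

noncomputable def zmodPowersHom (g : G) (hg : g ^ (m : ℤ) = 1) :
    Multiplicative (ZMod m) →* G :=
  AddMonoidHom.toMultiplicativeLeft <| ZMod.lift m
    ⟨zmultiplesHom (Additive G) (Additive.ofMul g), by
      simpa [← ofMul_zpow] using congrArg Additive.ofMul hg⟩

@[simp]
lemma zmodPowersHom_ofAdd_intCast (g : G) (hg : g ^ (m : ℤ) = 1) (k : ℤ) :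
    zmodPowersHom g hg (ofAdd (k : ZMod m)) = g ^ k := by
  simp [zmodPowersHom, ZMod.lift_coe]

lemma zmodPowersHom_ofAdd_one (g : G) (hg : g ^ (m : ℤ) = 1) :
    zmodPowersHom g hg (ofAdd 1) = g := by
  simpa using zmodPowersHom_ofAdd_intCast g hg 1

lemma ofAdd_intCast_zmod (k : ℤ) : ofAdd (k : ZMod m) = ofAdd 1 ^ k := by
  rw [← ofAdd_zsmul, zsmul_one]

lemma MonoidHom.ext_zmod {f f' : Multiplicative (ZMod m) →* G}
    (h : f (ofAdd 1) = f' (ofAdd 1)) : f = f' := by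
  refine MonoidHom.ext fun x => ?_
  obtain ⟨k, hk⟩ := ZMod.intCast_surjective (toAdd x)
  rw [← ofAdd_toAdd x, ← hk, ofAdd_intCast_zmod, map_zpow, map_zpow, h]

lemma zmodPowersHom_one (h : (1 : G) ^ (m : ℤ) = 1) : zmodPowersHom (1 : G) h = 1 :=
  MonoidHom.ext_zmod (zmodPowersHom_ofAdd_one 1 h)

end ZModPowers

namespace SemidirectProduct

variable {N G : Type*} [Group N] [Group G]

lemma inr_ofAdd_one_zpow_natCast {m : ℕ} (φ : Multiplicative (ZMod m) →* MulAut N) :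
    (inr (ofAdd 1) : N ⋊[φ] Multiplicative (ZMod m)) ^ (m : ℤ) = 1 := by
  rw [← map_zpow, ← ofAdd_intCast_zmod, Int.cast_natCast, ZMod.natCast_self, ofAdd_zero, map_one]

lemma inl_zpow_mul_inr_zpow_mul_inl_zpow_neg_mul_inr_zpow_neg {φ : G →* MulAut N} {n : N}
    {g : G} {ρ σ α : ℤ} (h : φ (g ^ α) (n ^ σ) = n ^ ρ) :
    (inl n : N ⋊[φ] G) ^ ρ * inr g ^ α * inl n ^ (-σ) * inr g ^ (-α) = 1 := by
  have key := inl_aut (φ := φ) (g ^ α) (n ^ (-σ))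
  rw [zpow_neg n, map_inv, h] at key
  rw [← map_zpow inl, ← map_zpow inr, ← map_zpow inl, ← map_zpow inr, zpow_neg g, zpow_neg n]
  simp only [mul_assoc] at key ⊢
  rw [← key, ← map_mul, mul_inv_cancel, map_one]

end SemidirectProduct

namespace Mrels

variable {m : ℕ} {ρ σ α : ℤ}

local notation "u" => (PresentedGroup.of true : PresentedGroup (Mrels m ρ σ α))
local notation "v" => (PresentedGroup.of false : PresentedGroup (Mrels m ρ σ α))

lemma of_false_zpow_eq_one : v ^ (m : ℤ) = 1 :=
  PresentedGroup.one_of_mem (Set.mem_insert _ _)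

lemma conj_of_false_zpow : v ^ α * u ^ σ * (v ^ α)⁻¹ = u ^ ρ := by
  have h : u ^ ρ * v ^ α * u ^ (-σ) * v ^ (-α) = 1 := by
    have := PresentedGroup.one_of_mem (Set.mem_insert_of_mem _ rfl : _ ∈ Mrels m ρ σ α)
    rwa [map_mul, map_mul, map_mul, map_zpow, map_zpow, map_zpow, map_zpow] at this
  rw [mul_assoc, mul_assoc] at h
  rw [eq_inv_of_mul_eq_one_left h]
  group

variable {G : Type*} [Group G]

noncomputable def lift (a b : G) (hb : b ^ (m : ℤ) = 1)
    (hab : a ^ ρ * b ^ α * a ^ (-σ) * b ^ (-α) = 1) : PresentedGroup (Mrels m ρ σ α) →* G :=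
  PresentedGroup.toGroup (f := fun x => if x then a else b) <| by
    rintro r (rfl | rfl)
    · simpa using hb
    · simpa using hab

@[simp]
lemma lift_of_true (a b : G) (hb : b ^ (m : ℤ) = 1)
    (hab : a ^ ρ * b ^ α * a ^ (-σ) * b ^ (-α) = 1) : lift a b hb hab u = a :=
  PresentedGroup.toGroup.of _

@[simp]
lemma lift_of_false (a b : G) (hb : b ^ (m : ℤ) = 1)
    (hab : a ^ ρ * b ^ α * a ^ (-σ) * b ^ (-α) = 1) : lift a b hb hab v = b :=
  PresentedGroup.toGroup.of _

lemma conj_of_false_apply_zpowersHom {ι : MulAut (Multiplicative ℤ)} (hι : ι ^ (m : ℤ) = 1)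
    (hσ : IsUnit σ) (hρσ : (ι ^ α) (ofAdd σ) = ofAdd ρ) (hmα : IsCoprime (m : ℤ) α)
    (x : Multiplicative ℤ) :
    MulAut.conj v (zpowersHom _ u x) = zpowersHom _ u (ι x) := by
  obtain ⟨γ, β, hβ⟩ := hmα
  have hα : ∀ x, MulAut.conj (v ^ α) (zpowersHom _ u x) = zpowersHom _ u ((ι ^ α) x) := by
    refine DFunLike.congr_fun (MonoidHom.ext_mint_of_isUnit
      (f := (MulAut.conj (v ^ α)).toMonoidHom.comp (zpowersHom _ u))
      (f' := (zpowersHom _ u).comp (ι ^ α).toMonoidHom) hσ ?_)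
    simp only [MonoidHom.comp_apply, MulEquiv.coe_toMonoidHom, zpowersHom_apply, toAdd_ofAdd,
      MulAut.conj_apply, hρσ]
    exact conj_of_false_zpow
  have := MulAut.zpow_apply_map _ hα β x
  rwa [← map_zpow, zpow_zpow_eq_self_of_zpow_eq_one of_false_zpow_eq_one hβ,
    zpow_zpow_eq_self_of_zpow_eq_one hι hβ] at this

variable {ι : MulAut (Multiplicative ℤ)} (hι : ι ^ (m : ℤ) = 1)

noncomputable def toSemidirectProduct (hρσ : (ι ^ α) (ofAdd σ) = ofAdd ρ) :
    PresentedGroup (Mrels m ρ σ α) →*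
      Multiplicative ℤ ⋊[zmodPowersHom ι hι] Multiplicative (ZMod m) :=
  lift (inl (ofAdd 1)) (inr (ofAdd 1)) (inr_ofAdd_one_zpow_natCast _) <|
    inl_zpow_mul_inr_zpow_mul_inl_zpow_neg_mul_inr_zpow_neg <| by
      simpa only [map_zpow (zmodPowersHom ι hι), zmodPowersHom_ofAdd_one, ← Int.ofAdd_mul,
        one_mul] using hρσ

noncomputable def ofSemidirectProduct (hσ : IsUnit σ) (hρσ : (ι ^ α) (ofAdd σ) = ofAdd ρ)
    (hmα : IsCoprime (m : ℤ) α) :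
    Multiplicative ℤ ⋊[zmodPowersHom ι hι] Multiplicative (ZMod m) →*
      PresentedGroup (Mrels m ρ σ α) :=
  SemidirectProduct.lift (zpowersHom _ u) (zmodPowersHom v of_false_zpow_eq_one) fun g => by
    obtain ⟨k, rfl⟩ : ∃ k : ℤ, ofAdd (k : ZMod m) = g :=
      ⟨_, congrArg ofAdd (ZMod.intCast_zmod_cast (toAdd g))⟩
    refine MonoidHom.ext fun x => ?_
    simp only [MonoidHom.comp_apply, MulEquiv.coe_toMonoidHom, zmodPowersHom_ofAdd_intCast,
      map_zpow]
    exact (MulAut.zpow_apply_map _ (conj_of_false_apply_zpowersHom hι hσ hρσ hmα) k x).symm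

theorem nonempty_mulEquiv_semidirectProduct (hσ : IsUnit σ)
    (hρσ : (ι ^ α) (ofAdd σ) = ofAdd ρ) (hmα : IsCoprime (m : ℤ) α) :
    Nonempty (PresentedGroup (Mrels m ρ σ α) ≃*
      Multiplicative ℤ ⋊[zmodPowersHom ι hι] Multiplicative (ZMod m)) := by
  refine ⟨(toSemidirectProduct hι hρσ).toMulEquiv (ofSemidirectProduct hι hσ hρσ hmα) ?_ ?_⟩
  · refine PresentedGroup.ext fun x => ?_
    cases x <;> simp [toSemidirectProduct, ofSemidirectProduct, zmodPowersHom_ofAdd_one]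
  · refine hom_ext (MonoidHom.ext_mint ?_) (MonoidHom.ext_zmod ?_) <;>
      simp [toSemidirectProduct, ofSemidirectProduct, zmodPowersHom_ofAdd_one]

end Mrels

/-- with `(ρ,σ) = 1`, `(m,α) = 1` and `ρ^m = σ^m`, either
`ρ = σ = ±1`, in which case `M ≅ ℤ × ℤ_m`, or `ρ = -σ = ±1` and `m` is even,
in which case `M ≅ ℤ ⋊ ℤ_m` with the `ℤ_m`-action inverting `ℤ`. -/
theorem stmt_3 (m : ℕ) (hm : 1 ≤ m) (ρ σ α : ℤ)
    (hρσ : Int.gcd ρ σ = 1) (hmα : Int.gcd (m : ℤ) α = 1)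
    (hpow : ρ ^ m = σ ^ m) :
    ((ρ = σ ∧ (ρ = 1 ∨ ρ = -1)) ∧
      Nonempty (PresentedGroup (Mrels m ρ σ α) ≃* Multiplicative (ℤ × ZMod m))) ∨
    ((ρ = -σ ∧ (ρ = 1 ∨ ρ = -1) ∧ Even m) ∧
      ∃ φ : Multiplicative (ZMod m) →* MulAut (Multiplicative ℤ),
        (∀ x : Multiplicative ℤ, φ (Multiplicative.ofAdd (1 : ZMod m)) x = x⁻¹) ∧
        Nonempty (PresentedGroup (Mrels m ρ σ α) ≃*
          SemidirectProduct (Multiplicative ℤ) (Multiplicative (ZMod m)) φ)) := by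
  have hmα' : IsCoprime (m : ℤ) α := Int.isCoprime_iff_gcd_eq_one.mpr hmα
  rcases (pow_eq_pow_iff_of_ne_zero (by omega)).mp hpow with rfl | ⟨rfl, hme⟩
  · have hρ : IsUnit ρ := Int.isUnit_iff_natAbs_eq.mpr (by rwa [Int.gcd_self] at hρσ)
    obtain ⟨e⟩ := Mrels.nonempty_mulEquiv_semidirectProduct (one_zpow (m : ℤ)) hρ
      (by rw [one_zpow]; rfl : ((1 : MulAut _) ^ α) (ofAdd ρ) = ofAdd ρ) hmα'
    rw [zmodPowersHom_one] at e
    exact .inl ⟨⟨rfl, Int.isUnit_iff.mp hρ⟩,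
      ⟨e.trans (mulEquivProd.trans (MulEquiv.prodMultiplicative ..).symm)⟩⟩
  · have hσ : IsUnit σ :=
      Int.isUnit_iff_natAbs_eq.mpr (by rwa [Int.neg_gcd, Int.gcd_self] at hρσ)
    have hα : Odd α := Int.not_even_iff_odd.mp fun h => by
      simpa [Int.isUnit_iff] using
        hmα'.isUnit_of_dvd' (Int.natCast_dvd_natCast.mpr hme.two_dvd) h.two_dvd
    have hι := zpow_eq_one_of_sq_eq_one_of_even (mulAut_inv_sq (Multiplicative ℤ))
      ((Int.even_coe_nat m).mpr hme)
    refine .inr ⟨⟨rfl, Int.isUnit_iff.mp hσ.neg, hme⟩, zmodPowersHom _ hι,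
      fun x => by rw [zmodPowersHom_ofAdd_one]; rfl,
      Mrels.nonempty_mulEquiv_semidirectProduct hι hσ ?_ hmα'⟩
    rw [zpow_eq_self_of_sq_eq_one_of_odd (mulAut_inv_sq _) hα]
    rfl
end

section
/- In the group M = ⟨u,v | v^m, u^ρ v^α u^{-σ} v^{-α}⟩ (with m ≥ 1), the element u satisfies u^{ρ^m} = u^{σ^m}, i.e. u^{ρ^m − σ^m} = 1. -/
theorem conj_pow_zpow_pow_of_conj_zpow {G : Type*} [Group G] {g u : G} {ρ σ : ℤ}
    (h : g * u ^ σ * g⁻¹ = u ^ ρ) (k : ℕ) :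
    g ^ k * u ^ (σ ^ k) * (g ^ k)⁻¹ = u ^ (ρ ^ k) := by
  induction k with
  | zero => simp
  | succ k ih =>
    calc g ^ (k + 1) * u ^ (σ ^ (k + 1)) * (g ^ (k + 1))⁻¹
        = g ^ k * (g * u ^ σ * g⁻¹) ^ σ ^ k * (g ^ k)⁻¹ := by
          rw [conj_zpow, pow_succ, pow_succ', zpow_mul]; group
      _ = (g ^ k * u ^ (σ ^ k) * (g ^ k)⁻¹) ^ ρ := by
          rw [h, conj_zpow, ← zpow_mul, ← zpow_mul, mul_comm]
      _ = u ^ (ρ ^ (k + 1)) := by rw [ih, ← zpow_mul, pow_succ]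

namespace Mrels

variable (m : ℕ) (ρ σ α : ℤ)

theorem zpow_of_false_eq_one :
    PresentedGroup.of (rels := Mrels m ρ σ α) false ^ (m : ℤ) = 1 :=
  PresentedGroup.one_of_mem (Set.mem_insert _ _)

theorem conj_zpow_of_true :
    PresentedGroup.of (rels := Mrels m ρ σ α) false ^ α *
        PresentedGroup.of (rels := Mrels m ρ σ α) true ^ σ *
        (PresentedGroup.of (rels := Mrels m ρ σ α) false ^ α)⁻¹ =
      PresentedGroup.of (rels := Mrels m ρ σ α) true ^ ρ := by
  have hrel : PresentedGroup.of (rels := Mrels m ρ σ α) true ^ ρ *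
      PresentedGroup.of false ^ α * PresentedGroup.of true ^ (-σ) *
      PresentedGroup.of false ^ (-α) = 1 :=
    PresentedGroup.one_of_mem (Set.mem_insert_of_mem _ rfl)
  rw [eq_comm, ← mul_inv_eq_one, ← hrel]
  group

end Mrels

theorem stmt_4_general (m : ℕ) (ρ σ α : ℤ) :
    (PresentedGroup.of (rels := Mrels m ρ σ α) true) ^ (ρ ^ m) =
      (PresentedGroup.of (rels := Mrels m ρ σ α) true) ^ (σ ^ m) ∧
    (PresentedGroup.of (rels := Mrels m ρ σ α) true) ^ (ρ ^ m - σ ^ m) = 1 := by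
  have hv : (PresentedGroup.of (rels := Mrels m ρ σ α) false ^ α) ^ m = 1 := by
    rw [← zpow_natCast, ← zpow_mul, mul_comm, zpow_mul, Mrels.zpow_of_false_eq_one, one_zpow]
  have hu := conj_pow_zpow_pow_of_conj_zpow (Mrels.conj_zpow_of_true m ρ σ α) m
  rw [hv, one_mul, inv_one, mul_one] at hu
  exact ⟨hu.symm, by rw [zpow_sub, hu, mul_inv_cancel]⟩

/-- in `M = ⟨u,v | v^m, u^ρ v^α u^{-σ} v^{-α}⟩` (with `m ≥ 1`),
the element `u` satisfies `u^{ρ^m} = u^{σ^m}`, i.e. `u^{ρ^m - σ^m} = 1`. -/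
theorem stmt_4 (m : ℕ) (hm : 1 ≤ m) (ρ σ α : ℤ) :
    (PresentedGroup.of (rels := Mrels m ρ σ α) true) ^ (ρ ^ m) =
      (PresentedGroup.of (rels := Mrels m ρ σ α) true) ^ (σ ^ m) ∧
    (PresentedGroup.of (rels := Mrels m ρ σ α) true) ^ (ρ ^ m - σ ^ m) = 1 :=
  stmt_4_general m ρ σ α
end

section
/- The group E = E(r,n,s,A) = ⟨t,y | t^n, y^r t^A y^{-s} t^{-A}⟩ is a semidirect product Γ ⋊ ⟨t⟩ where Γ is the normal closure of y in E and ⟨t⟩ is cyclic of order n; in particular Γ ∩ ⟨t⟩ = 1. -/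
/-- The relators of the group `E(r,n,s,A) = ⟨t,y | t^n, y^r t^A y^{-s} t^{-A}⟩`,
where `t` is indexed by `true` and `y` by `false`. -/
def Erels (n : ℕ) (r s A : ℤ) : Set (FreeGroup Bool) :=
  {FreeGroup.of true ^ (n : ℤ),
   FreeGroup.of false ^ r * FreeGroup.of true ^ A *
     FreeGroup.of false ^ (-s) * FreeGroup.of true ^ (-A)}

/-!
Killing `y` maps `E` onto `ℤ/n` with `t ↦ 1`; this map vanishes on the normal closure `Γ` of `y`
and is injective on `⟨t⟩`, because `t` has order dividing `n` in `E` and order exactly `n` in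
`ℤ/n`. Hence `Γ ∩ ⟨t⟩ = 1` and `⟨t⟩` is cyclic of order `n`, while `Γ⟨t⟩ = E` since `E` is
generated by `t` and `y`.
-/

open Subgroup

theorem Subgroup.inf_zpowers_eq_bot_of_le_ker {G H : Type*} [Group G] [Group H]
    {N : Subgroup G} {φ : G →* H} (hN : N ≤ φ.ker) {g : G} (hg : orderOf g ∣ orderOf (φ g)) :
    N ⊓ zpowers g = ⊥ := by
  rw [eq_bot_iff]
  rintro _ ⟨hkN, k, rfl⟩
  have hφ : φ g ^ k = 1 := by simpa using hN hkN
  exact mem_bot.mpr (orderOf_dvd_iff_zpow_eq_one.mp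
    ((Int.natCast_dvd_natCast.mpr hg).trans (orderOf_dvd_iff_zpow_eq_one.mpr hφ)))

theorem PresentedGroup.normalClosure_of_false_sup_zpowers_of_true {rels : Set (FreeGroup Bool)} :
    normalClosure {PresentedGroup.of (rels := rels) false} ⊔
      zpowers (PresentedGroup.of (rels := rels) true) = ⊤ := by
  rw [eq_top_iff, ← PresentedGroup.closure_range_of rels, closure_le]
  rintro _ ⟨(_ | _), rfl⟩
  · exact mem_sup_left (subset_normalClosure rfl)
  · exact mem_sup_right (mem_zpowers _)

namespace Erels

variable {n : ℕ} {r s A : ℤ}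

theorem toZMod_rels :
    ∀ w ∈ Erels n r s A,
      FreeGroup.lift (fun b => if b then Multiplicative.ofAdd (1 : ZMod n) else 1) w = 1 := by
  rintro w (rfl | rfl)
  · simp [← ofAdd_nsmul]
  · simp

def toZMod : PresentedGroup (Erels n r s A) →* Multiplicative (ZMod n) :=
  PresentedGroup.toGroup toZMod_rels

@[simp]
theorem toZMod_of_true :
    toZMod (PresentedGroup.of (rels := Erels n r s A) true) = Multiplicative.ofAdd 1 :=
  PresentedGroup.toGroup.of toZMod_rels

@[simp]
theorem toZMod_of_false : toZMod (PresentedGroup.of (rels := Erels n r s A) false) = 1 :=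
  PresentedGroup.toGroup.of toZMod_rels

theorem normalClosure_of_false_le_ker_toZMod :
    normalClosure {PresentedGroup.of (rels := Erels n r s A) false} ≤ toZMod.ker :=
  normalClosure_le_normal (Set.singleton_subset_iff.mpr toZMod_of_false)

theorem of_true_pow_eq_one : PresentedGroup.of (rels := Erels n r s A) true ^ n = 1 := by
  rw [← zpow_natCast, PresentedGroup.of, ← map_zpow]
  exact (QuotientGroup.eq_one_iff _).mpr (subset_normalClosure (Set.mem_insert _ _))

theorem orderOf_toZMod_of_true :
    orderOf (toZMod (PresentedGroup.of (rels := Erels n r s A) true)) = n := by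
  rw [toZMod_of_true, orderOf_ofAdd_eq_addOrderOf, ZMod.addOrderOf_one]

theorem orderOf_of_true : orderOf (PresentedGroup.of (rels := Erels n r s A) true) = n := by
  refine (orderOf_dvd_of_pow_eq_one of_true_pow_eq_one).antisymm ?_
  calc n = orderOf (toZMod (PresentedGroup.of (rels := Erels n r s A) true)) :=
        orderOf_toZMod_of_true.symm
    _ ∣ _ := orderOf_map_dvd _ _

end Erels

theorem stmt_7_general (n : ℕ) (r s A : ℤ) :
    Subgroup.normalClosure {PresentedGroup.of (rels := Erels n r s A) false} ⊔
      Subgroup.zpowers (PresentedGroup.of (rels := Erels n r s A) true) = ⊤ ∧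
    Subgroup.normalClosure {PresentedGroup.of (rels := Erels n r s A) false} ⊓
      Subgroup.zpowers (PresentedGroup.of (rels := Erels n r s A) true) = ⊥ ∧
    Nat.card (Subgroup.zpowers (PresentedGroup.of (rels := Erels n r s A) true)) = n :=
  ⟨PresentedGroup.normalClosure_of_false_sup_zpowers_of_true,
    inf_zpowers_eq_bot_of_le_ker Erels.normalClosure_of_false_le_ker_toZMod
      (Erels.orderOf_of_true.trans Erels.orderOf_toZMod_of_true.symm).dvd,
    by rw [Nat.card_zpowers, Erels.orderOf_of_true]⟩

/-- `E = ⟨t,y | t^n, y^r t^A y^{-s} t^{-A}⟩` is a semidirect product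
`Γ ⋊ ⟨t⟩` where `Γ` is the normal closure of `y` and `⟨t⟩` is cyclic of order `n`;
in particular `Γ ∩ ⟨t⟩ = 1`. -/
theorem stmt_7 (n : ℕ) (hn : 0 < n) (r s A : ℤ) :
    Subgroup.normalClosure {PresentedGroup.of (rels := Erels n r s A) false} ⊔
      Subgroup.zpowers (PresentedGroup.of (rels := Erels n r s A) true) = ⊤ ∧
    Subgroup.normalClosure {PresentedGroup.of (rels := Erels n r s A) false} ⊓
      Subgroup.zpowers (PresentedGroup.of (rels := Erels n r s A) true) = ⊥ ∧
    Nat.card (Subgroup.zpowers (PresentedGroup.of (rels := Erels n r s A) true)) = n :=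
  stmt_7_general n r s A
end

section
/- Let E = ⟨t,y | t^n, y^r t^A y^{-s} t^{-A}⟩ with n > 0, gcd(n,A) = 1, gcd(r,s) = 1 and r^n ≠ s^n. Then E is a finite metacyclic group of order n·|r^n − s^n|. -/
/-!
Write `y, t` for the generators and `u = t ^ A`; the second relator says `u y^s u⁻¹ = y^r`.
Iterating gives `u^i y^(s^i) u^(-i) = y^(r^i)`, so `u^n = 1` forces `y^M = 1` for
`M = r^n - s^n`. As `r` and `s` are units modulo `M`, conjugation by `u` and by `u⁻¹` maps `y`
into `⟨y⟩`, and `t` is a power of `u` because `gcd(n, A) = 1`; hence `⟨y⟩` is normal with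
cyclic quotient generated by `t`, and `|E|` divides `n |M|`. Conversely, some power `d` of
`r / s` in `(ℤ/|M|)ˣ` satisfies `d^n = 1` and `d^A s = r`, so sending `y` and `t` to the
generators `1` of the two factors defines a surjection of `E` onto `ℤ/|M| ⋊ ℤ/n`, in which
`1 ∈ ℤ/n` acts as multiplication by `d`; this group has order `n |M|`.
-/

/-- A group is metacyclic if it has a cyclic normal subgroup with cyclic quotient. -/
def IsMetacyclic (G : Type*) [Group G] : Prop :=
  ∃ (K : Subgroup G) (hK : K.Normal),
    IsCyclic K ∧ (let _inst : K.Normal := hK; IsCyclic (G ⧸ K))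

open Subgroup Multiplicative SemidirectProduct PresentedGroup

section Conjugation

variable {G : Type*} [Group G]

theorem mem_zpowers_zpow_of_isCoprime_s13 {x : G} {n A : ℤ} (hx : x ^ n = 1)
    (h : IsCoprime n A) : x ∈ zpowers (x ^ A) := by
  obtain ⟨c, e, hce⟩ := h
  refine mem_zpowers_iff.mpr ⟨e, ?_⟩
  calc (x ^ A) ^ e = (x ^ n) ^ (-c) * x ^ (c * n + e * A) := by group
    _ = x := by rw [hx, hce]; group

theorem exists_zpow_eq_of_isCoprime {q : G} {n A : ℤ} (hq : q ^ n = 1)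
    (h : IsCoprime n A) : ∃ d : G, d ^ n = 1 ∧ d ^ A = q := by
  obtain ⟨e, he⟩ := mem_zpowers_iff.mp (mem_zpowers_zpow_of_isCoprime_s13 hq h)
  refine ⟨q ^ e, ?_, ?_⟩
  · rw [← zpow_mul, mul_comm, zpow_mul, hq, one_zpow]
  · rw [← zpow_mul, mul_comm, zpow_mul, he]

theorem conj_zpow_pow_eq_zpow_pow {u y : G} {r s : ℤ} (h : u * y ^ s * u⁻¹ = y ^ r) (i : ℕ) :
    u ^ i * y ^ s ^ i * (u ^ i)⁻¹ = y ^ r ^ i := by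
  induction i with
  | zero => simp
  | succ i ih =>
    calc u ^ (i + 1) * y ^ s ^ (i + 1) * (u ^ (i + 1))⁻¹
        = u ^ i * (u * y ^ s * u⁻¹) ^ s ^ i * (u ^ i)⁻¹ := by
          rw [conj_zpow, ← zpow_mul, ← pow_succ']
          group
      _ = y ^ r ^ (i + 1) := by
          rw [h, ← zpow_mul, mul_comm, zpow_mul, ← conj_zpow, ih, ← zpow_mul, ← pow_succ]

theorem zpow_pow_sub_pow_eq_one {u y : G} {r s : ℤ} (h : u * y ^ s * u⁻¹ = y ^ r) {n : ℕ}
    (hu : u ^ n = 1) : y ^ (r ^ n - s ^ n) = 1 := by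
  rw [zpow_sub, ← conj_zpow_pow_eq_zpow_pow h n, hu]
  group

theorem conj_mem_zpowers_of_conj_zpow_eq {g y : G} {a b M : ℤ}
    (h : g * y ^ a * g⁻¹ = y ^ b) (hy : y ^ M = 1) (ha : IsCoprime a M) :
    g * y * g⁻¹ ∈ zpowers y := by
  obtain ⟨e, he⟩ := mem_zpowers_iff.mp (mem_zpowers_zpow_of_isCoprime_s13 hy ha.symm)
  have hconj : g * y * g⁻¹ = y ^ (b * e) := by rw [zpow_mul, ← h, conj_zpow, he]
  exact hconj ▸ zpow_mem_zpowers y (b * e)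

theorem mem_normalizer_zpowers_of_conj_zpow_eq {g y : G} {a b M : ℤ}
    (h : g * y ^ a * g⁻¹ = y ^ b) (hy : y ^ M = 1) (ha : IsCoprime a M) (hb : IsCoprime b M) :
    g ∈ normalizer (zpowers y : Set G) := by
  have h_inv : g⁻¹ * y ^ b * g⁻¹⁻¹ = y ^ a := by rw [← h]; group
  have hg := conj_mem_zpowers_of_conj_zpow_eq h hy ha
  have hg_inv := conj_mem_zpowers_of_conj_zpow_eq h_inv hy hb
  refine mem_normalizer_iff.mpr fun x ↦ ⟨fun hx ↦ ?_, fun hx ↦ ?_⟩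
  · obtain ⟨k, rfl⟩ := mem_zpowers_iff.mp hx
    exact conj_zpow (a := g) ▸ zpow_mem hg k
  · obtain ⟨k, hk⟩ := mem_zpowers_iff.mp hx
    have hx' : x = (g⁻¹ * y * g⁻¹⁻¹) ^ k := by rw [conj_zpow, hk]; group
    exact hx' ▸ zpow_mem hg_inv k

end Conjugation

section TwoGenerated

variable {G : Type*} [Group G] {y t : G}

theorem zpowers_mk_eq_top_of_closure_eq_top (hgen : closure {y, t} = ⊤) [(zpowers y).Normal] :
    zpowers (t : G ⧸ zpowers y) = ⊤ := by
  have hy : (y : G ⧸ zpowers y) = 1 := (QuotientGroup.eq_one_iff y).mpr (mem_zpowers y)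
  rw [← map_top_of_surjective _ (QuotientGroup.mk'_surjective (zpowers y)),
    ← hgen, MonoidHom.map_closure, Set.image_pair]
  simp only [QuotientGroup.mk'_apply, hy, closure_insert_one, zpowers_eq_closure]

theorem card_dvd_of_closure_eq_top (hgen : closure {y, t} = ⊤) [(zpowers y).Normal] {n : ℕ}
    {M : ℤ} (ht : t ^ n = 1) (hy : y ^ M = 1) : Nat.card G ∣ n * M.natAbs := by
  rw [card_eq_card_quotient_mul_card_subgroup (zpowers y), Nat.card_zpowers,
    ← card_top (G := G ⧸ zpowers y), ← zpowers_mk_eq_top_of_closure_eq_top hgen,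
    Nat.card_zpowers]
  refine mul_dvd_mul (orderOf_dvd_of_pow_eq_one ?_) ?_
  · rw [← QuotientGroup.mk_pow, ht, QuotientGroup.mk_one]
  · exact Int.natCast_dvd.mp (orderOf_dvd_iff_zpow_eq_one.mpr hy)

theorem isMetacyclic_of_closure_eq_top (hgen : closure {y, t} = ⊤) (hy : (zpowers y).Normal) :
    IsMetacyclic G :=
  ⟨zpowers y, hy, inferInstance,
    isCyclic_iff_exists_zpowers_eq_top.mpr ⟨_, zpowers_mk_eq_top_of_closure_eq_top hgen⟩⟩

end TwoGenerated

theorem IsCoprime.isCoprime_right_pow_sub_pow {R : Type*} [CommRing R] {r s : R}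
    (h : IsCoprime r s) {n : ℕ} (hn : n ≠ 0) : IsCoprime s (r ^ n - s ^ n) := by
  obtain ⟨k, rfl⟩ := Nat.exists_eq_succ_of_ne_zero hn
  simpa [pow_succ', sub_eq_add_neg, ← mul_neg] using
    (h.symm.pow_right (n := k + 1)).add_mul_left_right (-s ^ k)

theorem IsCoprime.isCoprime_left_pow_sub_pow {R : Type*} [CommRing R] {r s : R}
    (h : IsCoprime r s) {n : ℕ} (hn : n ≠ 0) : IsCoprime r (r ^ n - s ^ n) := by
  simpa using (h.symm.isCoprime_right_pow_sub_pow hn).neg_right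

theorem ZMod.intCast_natAbs_self (M : ℤ) : (M : ZMod M.natAbs) = 0 :=
  (ZMod.intCast_zmod_eq_zero_iff_dvd M _).mpr (Int.natAbs_dvd.mpr dvd_rfl)

theorem ZMod.isUnit_intCast_of_isCoprime {a M : ℤ} (h : IsCoprime a M) :
    IsUnit (a : ZMod M.natAbs) :=
  isCoprime_zero_right.mp <| by
    simpa [ZMod.intCast_natAbs_self] using h.map (Int.castRingHom (ZMod M.natAbs))

theorem ZMod.exists_unit_zpow_eq_one_zpow_mul_eq {n : ℕ} (hn : n ≠ 0) {r s A : ℤ}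
    (hnA : IsCoprime (n : ℤ) A) (hrs : IsCoprime r s) :
    ∃ d : (ZMod (r ^ n - s ^ n).natAbs)ˣ,
      d ^ (n : ℤ) = 1 ∧ (↑(d ^ A) : ZMod (r ^ n - s ^ n).natAbs) * s = r := by
  obtain ⟨su, hsu⟩ := ZMod.isUnit_intCast_of_isCoprime (hrs.isCoprime_right_pow_sub_pow hn)
  obtain ⟨ru, hru⟩ := ZMod.isUnit_intCast_of_isCoprime (hrs.isCoprime_left_pow_sub_pow hn)
  have hpow : ru ^ n = su ^ n := by
    ext
    have hM := ZMod.intCast_natAbs_self (r ^ n - s ^ n)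
    push_cast [hsu, hru] at hM ⊢
    exact sub_eq_zero.mp hM
  obtain ⟨d, hdn, hdA⟩ := exists_zpow_eq_of_isCoprime (q := ru * su⁻¹) (n := n)
    (by rw [zpow_natCast, mul_pow, hpow, inv_pow, mul_inv_cancel]) hnA
  exact ⟨d, hdn, by rw [hdA, ← hsu, ← hru]; simp⟩

def ZMod.zpowHom {B : Type*} [Group B] (n : ℕ) (d : B) (hd : d ^ (n : ℤ) = 1) :
    Multiplicative (ZMod n) →* B :=
  AddMonoidHom.toMultiplicativeLeft
    (ZMod.lift n ⟨zmultiplesHom (Additive B) (Additive.ofMul d), by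
      rw [zmultiplesHom_apply, ← ofMul_zpow, hd, ofMul_one]⟩)

theorem ZMod.zpowHom_ofAdd_intCast {B : Type*} [Group B] {n : ℕ} {d : B} (hd : d ^ (n : ℤ) = 1)
    (k : ℤ) : ZMod.zpowHom n d hd (ofAdd (k : ZMod n)) = d ^ k := by
  simp [ZMod.zpowHom, ZMod.lift_coe]

def mulZPowAction {R : Type*} [Ring R] (n : ℕ) (d : Rˣ) (hd : d ^ (n : ℤ) = 1) :
    Multiplicative (ZMod n) →* MulAut (Multiplicative R) :=
  (MulAutMultiplicative R).symm.toMonoidHom.comp (AddAut.mulLeft.comp (ZMod.zpowHom n d hd))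

theorem mulZPowAction_ofAdd_intCast {R : Type*} [Ring R] {n : ℕ} {d : Rˣ}
    (hd : d ^ (n : ℤ) = 1) (k : ℤ) (x : R) :
    mulZPowAction n d hd (ofAdd (k : ZMod n)) (ofAdd x) = ofAdd (((d ^ k : Rˣ) : R) * x) := by
  rw [mulZPowAction, MonoidHom.comp_apply, MonoidHom.comp_apply, ZMod.zpowHom_ofAdd_intCast]
  rfl

namespace SemidirectProduct

section Ring

variable {R S : Type*} [Ring R] [Ring S] {φ : Multiplicative S →* MulAut (Multiplicative R)}

theorem inl_ofAdd_one_zpow (k : ℤ) :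
    (inl (ofAdd 1) : Multiplicative R ⋊[φ] Multiplicative S) ^ k = inl (ofAdd (k : R)) := by
  rw [← map_zpow, ← ofAdd_zsmul, zsmul_one]

theorem inr_ofAdd_one_zpow (k : ℤ) :
    (inr (ofAdd 1) : Multiplicative R ⋊[φ] Multiplicative S) ^ k = inr (ofAdd (k : S)) := by
  rw [← map_zpow, ← ofAdd_zsmul, zsmul_one]

end Ring

theorem mulZPowAction_relator_eq_one {R : Type*} [Ring R] {n : ℕ} {d : Rˣ}
    (hd : d ^ (n : ℤ) = 1) {r s A : ℤ} (hrs : ((d ^ A : Rˣ) : R) * s = r) :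
    (inl (ofAdd 1) ^ r * inr (ofAdd 1) ^ A * inl (ofAdd 1) ^ (-s) * inr (ofAdd 1) ^ (-A) :
      Multiplicative R ⋊[mulZPowAction n d hd] Multiplicative (ZMod n)) = 1 := by
  set Y : Multiplicative R ⋊[mulZPowAction n d hd] Multiplicative (ZMod n) := inl (ofAdd 1)
  set T : Multiplicative R ⋊[mulZPowAction n d hd] Multiplicative (ZMod n) := inr (ofAdd 1)
  calc Y ^ r * T ^ A * Y ^ (-s) * T ^ (-A) = Y ^ r * (T ^ A * Y ^ (-s) * (T ^ A)⁻¹) := by group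
    _ = inl (ofAdd ((r : R) + ((d ^ A : Rˣ) : R) * (-s : ℤ))) := by
      rw [inl_ofAdd_one_zpow, inr_ofAdd_one_zpow, inl_ofAdd_one_zpow, ← map_inv, ← inl_aut,
        ← map_mul, mulZPowAction_ofAdd_intCast, ← ofAdd_add]
    _ = 1 := by rw [Int.cast_neg, mul_neg, hrs, add_neg_cancel, ofAdd_zero, map_one]

section ZMod

variable {m n : ℕ} {φ : Multiplicative (ZMod n) →* MulAut (Multiplicative (ZMod m))}

theorem closure_inl_inr_ofAdd_one :
    closure {inl (ofAdd 1), inr (ofAdd 1)} =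
      (⊤ : Subgroup (Multiplicative (ZMod m) ⋊[φ] Multiplicative (ZMod n))) := by
  refine eq_top_iff.mpr fun g _ ↦ ?_
  obtain ⟨k, hk⟩ := ZMod.intCast_surjective (toAdd g.left)
  obtain ⟨j, hj⟩ := ZMod.intCast_surjective (toAdd g.right)
  have hg : g = inl (ofAdd 1) ^ k * inr (ofAdd 1) ^ j := by
    rw [inl_ofAdd_one_zpow, inr_ofAdd_one_zpow, hk, hj]
    exact (inl_left_mul_inr_right g).symm
  rw [hg]
  exact mul_mem (zpow_mem (subset_closure (by simp)) k) (zpow_mem (subset_closure (by simp)) j)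

theorem card_zmod : Nat.card (Multiplicative (ZMod m) ⋊[φ] Multiplicative (ZMod n)) = m * n := by
  simp [SemidirectProduct.card, Nat.card_congr Multiplicative.toAdd]

end ZMod

end SemidirectProduct

namespace Erels

variable {n : ℕ} {r s A : ℤ}

theorem of_true_zpow_eq_one : (of true : PresentedGroup (Erels n r s A)) ^ (n : ℤ) = 1 := by
  have h := one_of_mem (rels := Erels n r s A) (Set.mem_insert _ _)
  rwa [map_zpow] at h

theorem relator_eq_one :
    (of false ^ r * of true ^ A * of false ^ (-s) * of true ^ (-A) :
      PresentedGroup (Erels n r s A)) = 1 := by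
  have h := one_of_mem (rels := Erels n r s A) (Set.mem_insert_of_mem _ rfl)
  rwa [map_mul, map_mul, map_mul, map_zpow, map_zpow, map_zpow, map_zpow] at h

theorem conj_of_false_zpow :
    (of true ^ A * of false ^ s * (of true ^ A)⁻¹ : PresentedGroup (Erels n r s A)) =
      of false ^ r := by
  calc _ = (of false ^ r * of true ^ A * of false ^ (-s) * of true ^ (-A))⁻¹ * of false ^ r := by
        group
    _ = of false ^ r := by rw [relator_eq_one, inv_one, one_mul]

theorem closure_of_false_of_true :
    closure {of false, of true} = (⊤ : Subgroup (PresentedGroup (Erels n r s A))) := by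
  rw [← closure_range_of]
  congr 1
  ext x
  simp

def lift {H : Type*} [Group H] {T Y : H} (hT : T ^ (n : ℤ) = 1)
    (hrel : Y ^ r * T ^ A * Y ^ (-s) * T ^ (-A) = 1) : PresentedGroup (Erels n r s A) →* H :=
  toGroup (f := fun b ↦ bif b then T else Y) <| by
    rintro w (rfl | rfl)
    exacts [by simpa using hT, by simpa using hrel]

theorem lift_surjective {H : Type*} [Group H] {T Y : H} (hT : T ^ (n : ℤ) = 1)
    (hrel : Y ^ r * T ^ A * Y ^ (-s) * T ^ (-A) = 1) (hgen : closure {Y, T} = ⊤) :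
    Function.Surjective (lift hT hrel) := by
  rw [← MonoidHom.range_eq_top, eq_top_iff, ← hgen, closure_le]
  rintro _ (rfl | rfl)
  exacts [⟨of false, toGroup.of _⟩, ⟨of true, toGroup.of _⟩]

theorem of_false_zpow_pow_sub_pow_eq_one :
    (of false : PresentedGroup (Erels n r s A)) ^ (r ^ n - s ^ n) = 1 :=
  zpow_pow_sub_pow_eq_one conj_of_false_zpow <| by
    rw [← zpow_natCast, ← zpow_mul, mul_comm, zpow_mul, of_true_zpow_eq_one, one_zpow]

theorem zpowers_of_false_normal (hn : n ≠ 0) (hnA : IsCoprime (n : ℤ) A) (hrs : IsCoprime r s) :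
    (zpowers (of false : PresentedGroup (Erels n r s A))).Normal := by
  have hu := mem_normalizer_zpowers_of_conj_zpow_eq (conj_of_false_zpow (n := n) (A := A))
    of_false_zpow_pow_sub_pow_eq_one (hrs.isCoprime_right_pow_sub_pow hn)
    (hrs.isCoprime_left_pow_sub_pow hn)
  have ht := zpowers_le.mpr hu (mem_zpowers_zpow_of_isCoprime_s13 of_true_zpow_eq_one hnA)
  rw [← normalizer_eq_top_iff, eq_top_iff, ← closure_of_false_of_true, closure_le]
  rintro _ (rfl | rfl)
  exacts [le_normalizer (mem_zpowers _), ht]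

theorem card_dvd (hn : n ≠ 0) (hnA : IsCoprime (n : ℤ) A) (hrs : IsCoprime r s) :
    Nat.card (PresentedGroup (Erels n r s A)) ∣ n * (r ^ n - s ^ n).natAbs :=
  haveI := zpowers_of_false_normal hn hnA hrs
  card_dvd_of_closure_eq_top closure_of_false_of_true
    (by rw [← zpow_natCast]; exact of_true_zpow_eq_one) of_false_zpow_pow_sub_pow_eq_one

theorem mul_natAbs_dvd_card (hn : n ≠ 0) (hnA : IsCoprime (n : ℤ) A) (hrs : IsCoprime r s) :
    n * (r ^ n - s ^ n).natAbs ∣ Nat.card (PresentedGroup (Erels n r s A)) := by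
  obtain ⟨d, hdn, hdA⟩ := ZMod.exists_unit_zpow_eq_one_zpow_mul_eq hn hnA hrs
  have hT : (inr (ofAdd 1) : Multiplicative (ZMod (r ^ n - s ^ n).natAbs) ⋊[mulZPowAction n d hdn]
      Multiplicative (ZMod n)) ^ (n : ℤ) = 1 := by
    rw [inr_ofAdd_one_zpow, Int.cast_natCast, ZMod.natCast_self, ofAdd_zero, map_one]
  rw [mul_comm, ← card_zmod (φ := mulZPowAction n d hdn)]
  exact card_dvd_of_surjective _
    (lift_surjective hT (mulZPowAction_relator_eq_one hdn hdA) closure_inl_inr_ofAdd_one)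

end Erels

/-- with `n > 0`, `gcd(n,A) = 1`, `gcd(r,s) = 1` and `r^n ≠ s^n`,
the group `E = ⟨t,y | t^n, y^r t^A y^{-s} t^{-A}⟩` is a finite metacyclic group of
order `n·|r^n - s^n|`. -/
theorem stmt_13 (n : ℕ) (hn : 0 < n) (r s A : ℤ)
    (hnA : Int.gcd (n : ℤ) A = 1) (hrs : Int.gcd r s = 1) (hpow : r ^ n ≠ s ^ n) :
    Finite (PresentedGroup (Erels n r s A)) ∧
    Nat.card (PresentedGroup (Erels n r s A)) = n * (r ^ n - s ^ n).natAbs ∧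
    IsMetacyclic (PresentedGroup (Erels n r s A)) := by
  have hnA' := Int.isCoprime_iff_gcd_eq_one.mpr hnA
  have hrs' := Int.isCoprime_iff_gcd_eq_one.mpr hrs
  have hcard := Nat.dvd_antisymm (Erels.card_dvd hn.ne' hnA' hrs')
    (Erels.mul_natAbs_dvd_card hn.ne' hnA' hrs')
  have hne : n * (r ^ n - s ^ n).natAbs ≠ 0 :=
    mul_ne_zero hn.ne' (Int.natAbs_ne_zero.mpr (sub_ne_zero.mpr hpow))
  exact ⟨Nat.finite_of_card_ne_zero (hcard ▸ hne), hcard,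
    isMetacyclic_of_closure_eq_top Erels.closure_of_false_of_true
      (Erels.zpowers_of_false_normal hn.ne' hnA' hrs')⟩
end

section
/- Let Γ₀ = G_n(x_0^r x_1^{-s}) with gcd(r,s) = 1 and μ = |r^n − s^n| ≠ 0, so Γ₀ ≅ Z_μ generated by x_0, and the shift θ acts on Z_μ as multiplication by β = r(s^{n-1}a + b) where a r^n + b s = 1. Then for k ∈ Z_μ and 0 ≤ j < n: θ^j(k) = k if and only if (r^j − s^j)k ≡ 0 mod μ. In particular Fix(θ^j) is the subgroup of Z_μ of order gcd(r^n − s^n, r^j − s^j) = |r^{gcd(n,j)} − s^{gcd(n,j)}|. -/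
/-!
Modulo `μ` we have `r^n = s^n`, so `a r^n + b s = 1` says that `c = s^(n-1) a + b` inverts `s`
and `β = r c` acts as `r / s`; hence `β^j k = k` iff `r^j k = s^j k`. The kernel of multiplication
by `M` on the cyclic group `ℤ/μ` has `gcd(μ, M)` elements. Finally
`r^(m+k) - s^(m+k) = r^m (r^k - s^k) + s^k (r^m - s^m)` with `r^m` coprime to `r^m - s^m` lets
the Euclidean algorithm run on the exponents of `gcd(r^m - s^m, r^n - s^n)`.
-/

theorem Int.gcd_mul_left_cancel_right_of_isCoprime {c m : ℤ} (h : IsCoprime c m) (n : ℤ) :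
    Int.gcd m (c * n) = Int.gcd m n := by
  rw [Int.gcd, Int.gcd, Int.natAbs_mul]
  exact Nat.Coprime.gcd_mul_left_cancel_right _ (Int.isCoprime_iff_gcd_eq_one.mp h)

theorem IsCoprime.pow_isCoprime_pow_sub_pow {R : Type*} [CommRing R] {r s : R}
    (hrs : IsCoprime r s) (m : ℕ) : IsCoprime (r ^ m) (r ^ m - s ^ m) := by
  simpa [sub_eq_neg_add] using (hrs.pow (m := m) (n := m)).neg_right.add_mul_left_right 1

namespace Int

variable {r s : ℤ}

theorem gcd_pow_sub_pow_add (hrs : IsCoprime r s) (m k : ℕ) :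
    Int.gcd (r ^ m - s ^ m) (r ^ (m + k) - s ^ (m + k)) =
      Int.gcd (r ^ m - s ^ m) (r ^ k - s ^ k) := by
  have hsplit : r ^ (m + k) - s ^ (m + k) = r ^ m * (r ^ k - s ^ k) + s ^ k * (r ^ m - s ^ m) := by
    ring
  rw [hsplit, Int.gcd_add_mul_right_right,
    Int.gcd_mul_left_cancel_right_of_isCoprime (hrs.pow_isCoprime_pow_sub_pow m)]

theorem gcd_pow_sub_pow_add_mul (hrs : IsCoprime r s) (m k q : ℕ) :
    Int.gcd (r ^ m - s ^ m) (r ^ (k + m * q) - s ^ (k + m * q)) =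
      Int.gcd (r ^ m - s ^ m) (r ^ k - s ^ k) := by
  induction q with
  | zero => rfl
  | succ q ih => rw [mul_add_one, ← add_assoc, add_comm, gcd_pow_sub_pow_add hrs, ih]

theorem gcd_pow_sub_pow (hrs : IsCoprime r s) (m n : ℕ) :
    Int.gcd (r ^ m - s ^ m) (r ^ n - s ^ n) = (r ^ Nat.gcd m n - s ^ Nat.gcd m n).natAbs := by
  induction m, n using Nat.gcd.induction with
  | H0 n => simp
  | H1 m n _ ih =>
    have hdiv := gcd_pow_sub_pow_add_mul hrs m (n % m) (n / m)
    rw [Nat.mod_add_div] at hdiv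
    rw [Nat.gcd_rec, ← ih, Int.gcd_comm (r ^ (n % m) - _), hdiv]

end Int

theorem ZMod.card_intCast_mul_eq_zero {m : ℤ} (hm : m ≠ 0) (M : ℤ) :
    Nat.card {k : ZMod m.natAbs // (M : ZMod m.natAbs) * k = 0} = Int.gcd m M := by
  have : NeZero m.natAbs := ⟨Int.natAbs_ne_zero.mpr hm⟩
  have hker : ∀ k : ZMod m.natAbs,
      (M : ZMod m.natAbs) * k = 0 ↔ k ∈ (nsmulAddMonoidHom M.natAbs).ker := by
    intro k
    rw [AddMonoidHom.mem_ker, nsmulAddMonoidHom_apply, ← zsmul_eq_mul, ← natAbs_nsmul_eq_zero]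
  rw [Nat.card_congr (Equiv.subtypeEquivRight hker), IsAddCyclic.card_nsmulAddMonoidHom_ker,
    Nat.card_zmod]
  rfl

theorem mul_pow_pred_mul_add_eq_one {R : Type*} [CommRing R] {r s a b : R} {n : ℕ} (hn : n ≠ 0)
    (hrs : r ^ n = s ^ n) (hab : a * r ^ n + b * s = 1) : s * (s ^ (n - 1) * a + b) = 1 := by
  obtain ⟨m, rfl⟩ := Nat.exists_eq_succ_of_ne_zero hn
  rw [Nat.succ_sub_one]
  rw [Nat.succ_eq_add_one] at hrs hab
  linear_combination hab - a * hrs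

theorem mul_pow_mul_eq_self_iff {R : Type*} [CommRing R] {r s c : R} (hsc : s * c = 1) (j : ℕ)
    (k : R) : (r * c) ^ j * k = k ↔ (r ^ j - s ^ j) * k = 0 := by
  have hsj : s ^ j * c ^ j = 1 := by rw [← mul_pow, hsc, one_pow]
  have hs : s ^ j * ((r * c) ^ j * k) = r ^ j * k := by
    linear_combination r ^ j * k * hsj
  have hu : IsUnit (s ^ j) := (IsUnit.of_mul_eq_one c hsc).pow j
  rw [← hu.mul_right_inj, hs, sub_mul, sub_eq_zero]

theorem stmt_17_general (r s a b : ℤ) (n : ℕ) (hrs : Int.gcd r s = 1)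
    (hab : a * r ^ n + b * s = 1) (hμ : (r ^ n - s ^ n).natAbs ≠ 0)
    (j : ℕ) :
    (∀ k : ZMod ((r ^ n - s ^ n).natAbs),
        ((r * (s ^ (n - 1) * a + b) : ℤ) : ZMod ((r ^ n - s ^ n).natAbs)) ^ j * k = k ↔
          ((r ^ j - s ^ j : ℤ) : ZMod ((r ^ n - s ^ n).natAbs)) * k = 0) ∧
    Nat.card {k : ZMod ((r ^ n - s ^ n).natAbs) //
        ((r * (s ^ (n - 1) * a + b) : ℤ) : ZMod ((r ^ n - s ^ n).natAbs)) ^ j * k = k} =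
      Int.gcd (r ^ n - s ^ n) (r ^ j - s ^ j) ∧
    Int.gcd (r ^ n - s ^ n) (r ^ j - s ^ j) =
      (r ^ Nat.gcd n j - s ^ Nat.gcd n j).natAbs := by
  have hn : n ≠ 0 := by rintro rfl; simp at hμ
  set μ := (r ^ n - s ^ n).natAbs
  have hpow : (r : ZMod μ) ^ n = (s : ZMod μ) ^ n := by
    have h : ((r ^ n - s ^ n : ℤ) : ZMod μ) = 0 :=
      (ZMod.intCast_zmod_eq_zero_iff_dvd _ _).mpr (Int.natAbs_dvd.mpr dvd_rfl)
    push_cast at h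
    exact sub_eq_zero.mp h
  have hab' : (a : ZMod μ) * (r : ZMod μ) ^ n + (b : ZMod μ) * (s : ZMod μ) = 1 := by
    exact_mod_cast congrArg (Int.cast : ℤ → ZMod μ) hab
  have hfix (k : ZMod μ) :
      ((r * (s ^ (n - 1) * a + b) : ℤ) : ZMod μ) ^ j * k = k ↔
        ((r ^ j - s ^ j : ℤ) : ZMod μ) * k = 0 := by
    push_cast
    exact mul_pow_mul_eq_self_iff (mul_pow_pred_mul_add_eq_one hn hpow hab') j k
  refine ⟨hfix, ?_, Int.gcd_pow_sub_pow (Int.isCoprime_iff_gcd_eq_one.mpr hrs) n j⟩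
  rw [Nat.card_congr (Equiv.subtypeEquivRight hfix)]
  exact ZMod.card_intCast_mul_eq_zero (Int.natAbs_ne_zero.mp hμ) _

/-- let `gcd(r,s) = 1`, `μ = |r^n - s^n| ≠ 0`, and `a r^n + b s = 1`,
so that `Γ₀ = G_n(x_0^r x_1^{-s}) ≅ ℤ_μ` with the shift `θ` acting as multiplication by
`β = r(s^{n-1}a + b)`.  For `k ∈ ℤ_μ` and `0 ≤ j < n`: `θ^j(k) = k` iff
`(r^j - s^j)·k ≡ 0 mod μ`; in particular `Fix(θ^j)` has order
`gcd(r^n - s^n, r^j - s^j) = |r^{(n,j)} - s^{(n,j)}|`. -/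
theorem stmt_17 (r s a b : ℤ) (n : ℕ) (hn : 1 ≤ n) (hrs : Int.gcd r s = 1)
    (hab : a * r ^ n + b * s = 1) (hμ : (r ^ n - s ^ n).natAbs ≠ 0)
    (j : ℕ) (hj : j < n) :
    (∀ k : ZMod ((r ^ n - s ^ n).natAbs),
        ((r * (s ^ (n - 1) * a + b) : ℤ) : ZMod ((r ^ n - s ^ n).natAbs)) ^ j * k = k ↔
          ((r ^ j - s ^ j : ℤ) : ZMod ((r ^ n - s ^ n).natAbs)) * k = 0) ∧
    Nat.card {k : ZMod ((r ^ n - s ^ n).natAbs) //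
        ((r * (s ^ (n - 1) * a + b) : ℤ) : ZMod ((r ^ n - s ^ n).natAbs)) ^ j * k = k} =
      Int.gcd (r ^ n - s ^ n) (r ^ j - s ^ j) ∧
    Int.gcd (r ^ n - s ^ n) (r ^ j - s ^ j) =
      (r ^ Nat.gcd n j - s ^ Nat.gcd n j).natAbs :=
  stmt_17_general r s a b n hrs hab hμ j
end

section
/- Let r, s, n, j be integers with gcd(r,s) = 1, n ≥ 1 and 0 ≤ j. Then gcd(r^n − s^n, r^j − s^j) = ±(r^{gcd(n,j)} − s^{gcd(n,j)}), i.e., |gcd(r^n − s^n, r^j − s^j)| = |r^{gcd(n,j)} − s^{gcd(n,j)}|. -/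
/-!
The sequence `f k = r ^ k - s ^ k` satisfies `f (m + n) = s ^ n * f m + r ^ m * f n`, and `s ^ n`
is coprime to `f n`. Hence `gcd (f n) (f (m + n)) = gcd (f n) (f m)`: the gcd of two terms follows
the subtractive Euclidean algorithm on their indices, which ends at `f (gcd n j)` and `f 0 = 0`.
-/

theorem Int.gcd_apply_add_mul_right {f : ℕ → ℤ}
    (hadd : ∀ m n, Int.gcd (f n) (f (m + n)) = Int.gcd (f n) (f m)) (m n q : ℕ) :
    Int.gcd (f n) (f (m + n * q)) = Int.gcd (f n) (f m) := by
  induction q with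
  | zero => simp
  | succ q ih => rw [mul_add_one, ← add_assoc, hadd, ih]

theorem Int.gcd_apply_apply_eq_natAbs_apply_gcd {f : ℕ → ℤ} (h0 : f 0 = 0)
    (hadd : ∀ m n, Int.gcd (f n) (f (m + n)) = Int.gcd (f n) (f m)) (m n : ℕ) :
    Int.gcd (f m) (f n) = (f (Nat.gcd m n)).natAbs := by
  induction m, n using Nat.gcd.induction with
  | H0 n => simp [h0]
  | H1 m n _ ih =>
    rw [← Nat.mod_add_div n m, Int.gcd_apply_add_mul_right hadd, Int.gcd_comm, ih,
      ← Nat.gcd_rec, Nat.mod_add_div]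

theorem Int.gcd_pow_sub_pow_add_s18 {r s : ℤ} (hrs : IsCoprime r s) (m n : ℕ) :
    Int.gcd (r ^ n - s ^ n) (r ^ (m + n) - s ^ (m + n)) =
      Int.gcd (r ^ n - s ^ n) (r ^ m - s ^ m) := by
  have hcop : Int.gcd (r ^ n - s ^ n) (s ^ n) = 1 := by
    rw [← Int.isCoprime_iff_gcd_eq_one, ← IsCoprime.sub_mul_left_left_iff (z := -1)]
    simpa using hrs.pow
  have hsplit : r ^ (m + n) - s ^ (m + n) = s ^ n * (r ^ m - s ^ m) + (r ^ n - s ^ n) * r ^ m := by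
    ring
  rw [hsplit, Int.gcd_add_mul_left_right, Int.gcd_mul_right_right_of_gcd_eq_one hcop]

theorem stmt_18_general (r s : ℤ) (hrs : Int.gcd r s = 1) (n j : ℕ) :
    Int.gcd (r ^ n - s ^ n) (r ^ j - s ^ j) =
      (r ^ Nat.gcd n j - s ^ Nat.gcd n j).natAbs :=
  Int.gcd_apply_apply_eq_natAbs_apply_gcd (f := fun k => r ^ k - s ^ k) (by simp)
    (Int.gcd_pow_sub_pow_add_s18 (Int.isCoprime_iff_gcd_eq_one.mpr hrs)) n j

/-- for coprime integers `r, s` and natural numbers `n ≥ 1`, `j`,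
`gcd(r^n - s^n, r^j - s^j) = |r^{gcd(n,j)} - s^{gcd(n,j)}|`. -/
theorem stmt_18 (r s : ℤ) (hrs : Int.gcd r s = 1) (n j : ℕ) (hn : 1 ≤ n) :
    Int.gcd (r ^ n - s ^ n) (r ^ j - s ^ j) =
      (r ^ Nat.gcd n j - s ^ Nat.gcd n j).natAbs :=
  stmt_18_general r s hrs n j
end
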